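/- arXiv:1008.5319 — 2 statements merged into one kernel-verified Lean document; each statement's English description precedes it below -/
import Mathlib

section
/- (Lemma 2(ii), inequality) Let X be a real random variable with E X⁶ < ∞, mean μ, and variance σ² > 0. Let γ = μ₃/σ³ be the skewness, κ = μ₄/σ⁴ − 3 the excess kurtosis, and λ = μ₆/σ⁶ − 15κ − 10γ² − 15 the sixth standardized cumulant, where μ_k = E(X − μ)^k. Then κ² ≤ λ + 9(κ + γ²) + 6. -/
/-!
With `Y = X - μ` we have `Cov(Y³, Y) = μ₄`, `Var(Y³) = μ₆ - μ₃²` and `Var Y = σ²`, so the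
Cauchy–Schwarz inequality for covariances gives `μ₄² ≤ (μ₆ - μ₃²) σ²`. Dividing by `σ⁸`, this is
`(κ + 3)² + γ² ≤ μ₆ / σ⁶`, which is the claim once `λ` is unfolded.
-/

open MeasureTheory ProbabilityTheory

section Moments

variable {Ω : Type*} [MeasurableSpace Ω] {P : Measure Ω}

lemma Even.memLp_of_integrable_pow {f : Ω → ℝ} {n : ℕ} (hn : Even n)
    (hf : AEStronglyMeasurable f P) (hint : Integrable (fun ω => f ω ^ n) P) :
    MemLp f n P := by
  rcases eq_or_ne n 0 with rfl | hn0
  · simpa using hf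
  rw [← integrable_norm_rpow_iff hf (by exact_mod_cast hn0) (by simp)]
  simpa [Real.rpow_natCast, hn.pow_abs] using hint

lemma covariance_sq_le_variance_mul_variance [IsFiniteMeasure P] {X Y : Ω → ℝ}
    (hX : MemLp X 2 P) (hY : MemLp Y 2 P) : cov[X, Y; P] ^ 2 ≤ Var[X; P] * Var[Y; P] := by
  have hquad : ∀ t : ℝ, 0 ≤ Var[X; P] * (t * t) + (-2 * cov[X, Y; P]) * t + Var[Y; P] := by
    intro t
    have h := variance_nonneg (t • X - Y) P
    rw [variance_sub (hX.const_smul t) hY, variance_smul, covariance_smul_left] at h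
    linarith
  have := discrim_le_zero hquad
  rw [discrim] at this
  linarith

lemma sq_integral_pow_four_le [IsProbabilityMeasure P] {Y : Ω → ℝ} (hY : MemLp Y 6 P)
    (hY0 : P[Y] = 0) :
    (∫ ω, Y ω ^ 4 ∂P) ^ 2 ≤ (∫ ω, Y ω ^ 6 ∂P - (∫ ω, Y ω ^ 3 ∂P) ^ 2) * ∫ ω, Y ω ^ 2 ∂P := by
  have hY2 : MemLp Y 2 P := hY.mono_exponent (by norm_num)
  have hY3 : MemLp (Y ^ 3) 2 P := by
    rw [memLp_two_iff_integrable_sq (hY.aestronglyMeasurable.pow 3)]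
    simpa [← pow_mul, (by decide : Even 6).pow_abs] using hY.integrable_norm_pow'
  have hcov : cov[Y ^ 3, Y; P] = ∫ ω, Y ω ^ 4 ∂P := by
    simp [covariance_eq_sub hY3 hY2, hY0, ← pow_succ]
  have hvar3 : Var[Y ^ 3; P] = ∫ ω, Y ω ^ 6 ∂P - (∫ ω, Y ω ^ 3 ∂P) ^ 2 := by
    simp [variance_eq_sub hY3, ← pow_mul]
  have hvar : Var[Y; P] = ∫ ω, Y ω ^ 2 ∂P := by
    simp [variance_eq_sub hY2, hY0]
  rw [← hcov, ← hvar3, ← hvar]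
  exact covariance_sq_le_variance_mul_variance hY3 hY2

end Moments

lemma sq_div_add_sq_div_le_div {σ m3 m4 m6 : ℝ} (hσ : 0 < σ)
    (h : m4 ^ 2 ≤ (m6 - m3 ^ 2) * σ ^ 2) :
    (m4 / σ ^ 4) ^ 2 + (m3 / σ ^ 3) ^ 2 ≤ m6 / σ ^ 6 := by
  calc (m4 / σ ^ 4) ^ 2 + (m3 / σ ^ 3) ^ 2 = (m4 ^ 2 + m3 ^ 2 * σ ^ 2) / σ ^ 8 := by
        field_simp
    _ ≤ m6 * σ ^ 2 / σ ^ 8 := by gcongr; linarith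
    _ = m6 / σ ^ 6 := by field_simp

/-- Lemma 2(ii), inequality: for a real random variable `X` with `E X⁶ < ∞`, mean `μ` and
variance `σ² > 0`, with skewness `γ`, excess kurtosis `κ` and sixth standardized cumulant
`λ = μ₆/σ⁶ - 15κ - 10γ² - 15`, we have `κ² ≤ λ + 9(κ + γ²) + 6`. -/
theorem sq_kurtosis_le
    {Ω : Type*} [MeasureSpace Ω] [IsProbabilityMeasure (ℙ : Measure Ω)]
    (X : Ω → ℝ) (μ σ μ3 μ4 μ6 γ κ lam : ℝ)
    (hmeas : Measurable X)
    (hmom : Integrable (fun ω => (X ω) ^ 6) ℙ)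
    (hmean : 𝔼[X] = μ)
    (hσ : 0 < σ) (hvar : variance X ℙ = σ ^ 2)
    (hμ3 : (∫ ω, (X ω - μ) ^ 3 ∂ℙ) = μ3)
    (hμ4 : (∫ ω, (X ω - μ) ^ 4 ∂ℙ) = μ4)
    (hμ6 : (∫ ω, (X ω - μ) ^ 6 ∂ℙ) = μ6)
    (hγ : γ = μ3 / σ ^ 3) (hκ : κ = μ4 / σ ^ 4 - 3)
    (hlam : lam = μ6 / σ ^ 6 - 15 * κ - 10 * γ ^ 2 - 15) :
    κ ^ 2 ≤ lam + 9 * (κ + γ ^ 2) + 6 := by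
  have hX : MemLp X 6 ℙ :=
    (by decide : Even 6).memLp_of_integrable_pow hmeas.aestronglyMeasurable hmom
  have hY : MemLp (fun ω => X ω - μ) 6 ℙ := hX.sub (memLp_const μ)
  have hY0 : 𝔼[fun ω => X ω - μ] = 0 := by
    rw [integral_sub (hX.integrable (by norm_num)) (integrable_const μ), hmean]
    simp
  have hY2 : ∫ ω, (X ω - μ) ^ 2 = σ ^ 2 := by
    rw [← hvar, variance_eq_integral hmeas.aemeasurable, hmean]
  have key := sq_integral_pow_four_le hY hY0
  rw [hμ3, hμ4, hμ6, hY2] at key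
  have hstd := sq_div_add_sq_div_le_div hσ key
  subst hγ hκ hlam
  linear_combination hstd
end

section
/- Let X be a real random variable with E X⁶ < ∞, mean μ, variance σ² > 0, skewness γ = μ₃/σ³, excess kurtosis κ = μ₄/σ⁴ − 3, and sixth standardized cumulant λ = μ₆/σ⁶ − 15κ − 10γ² − 15, where μ_k = E(X − μ)^k. For every integer n ≥ 3, the quantity ρ₃ = κ / √(λ + 9(n/(n−1))(κ + γ²) + 6n²/((n−1)(n−2))) satisfies |ρ₃| < 1. -/
/-!
With `Z = (X - μ) / σ` and `m k = E Z ^ k`, the radicand minus `κ²` equals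
`(m 6 - m 4 ^ 2 - m 3 ^ 2) + 9 (m 4 - 1 + m 3 ^ 2) / (n - 1) + 24 / ((n - 1) (n - 2))`.
Since `m 1 = 0` and `m 2 = 1`, the first bracket is `E (Z ^ 3 - m 4 Z - m 3) ^ 2 ≥ 0`, the
second is at least `m 4 - 1 = E (Z ^ 2 - 1) ^ 2 ≥ 0`, and the last term is positive for `n ≥ 3`.
-/

open MeasureTheory ProbabilityTheory

section Moments

variable {Ω : Type*} [MeasurableSpace Ω] {P : Measure Ω} {Y : Ω → ℝ}

lemma memLp_of_integrable_pow {k : ℕ} (hk : Even k) (hY : AEStronglyMeasurable Y P)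
    (h : Integrable (fun ω => Y ω ^ k) P) : MemLp Y k P := by
  rcases eq_or_ne k 0 with rfl | hk0
  · simpa using hY
  rw [← integrable_norm_rpow_iff hY (by exact_mod_cast hk0) (ENNReal.natCast_ne_top k)]
  simpa [Real.norm_eq_abs, hk.pow_abs] using h

lemma MemLp.integrable_pow_of_le [IsFiniteMeasure P] {j k : ℕ} (hY : MemLp Y k P)
    (hjk : j ≤ k) : Integrable (fun ω => Y ω ^ j) P := by
  refine (integrable_norm_iff (hY.aestronglyMeasurable.pow j)).mp ?_
  simpa [norm_pow] using (hY.mono_exponent (by exact_mod_cast hjk)).integrable_norm_pow'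

lemma integral_sum_mul_pow [IsFiniteMeasure P] {N : ℕ} (hY : MemLp Y N P)
    (c : Fin (N + 1) → ℝ) :
    ∫ ω, ∑ k : Fin (N + 1), c k * Y ω ^ (k : ℕ) ∂P = ∑ k : Fin (N + 1), c k * moment Y k P := by
  rw [integral_finsetSum]
  · simp only [integral_const_mul, moment_def, Pi.pow_apply]
  · exact fun k _ => (MemLp.integrable_pow_of_le hY k.is_le).const_mul _

lemma moment_div_const (μ σ : ℝ) (k : ℕ) :
    moment (fun ω => (Y ω - μ) / σ) k P = (∫ ω, (Y ω - μ) ^ k ∂P) / σ ^ k := by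
  simp [moment, div_pow, integral_div]

variable [IsProbabilityMeasure P]

lemma moment_zero_eq_one : moment Y 0 P = 1 := by simp [moment]

lemma one_le_moment_four (hY : MemLp Y 4 P) (h2 : moment Y 2 P = 1) : 1 ≤ moment Y 4 P := by
  have hsq : ∀ ω, (Y ω ^ 2 - 1) ^ 2 = ∑ k : Fin 5, ![1, 0, -2, 0, 1] k * Y ω ^ (k : ℕ) := by
    intro ω
    simp only [Fin.sum_univ_five, Matrix.cons_val, Fin.coe_ofNat_eq_mod, Nat.reduceMod]
    ring
  have h : 0 ≤ ∫ ω, (Y ω ^ 2 - 1) ^ 2 ∂P := integral_nonneg fun ω => sq_nonneg _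
  rw [integral_congr_ae (.of_forall hsq), integral_sum_mul_pow hY, Fin.sum_univ_five] at h
  simp only [Matrix.cons_val, Fin.coe_ofNat_eq_mod, Nat.reduceAdd, Nat.reduceMod,
    moment_zero_eq_one, h2] at h
  linarith

lemma moment_four_sq_add_moment_three_sq_le_moment_six (hY : MemLp Y 6 P)
    (h1 : moment Y 1 P = 0) (h2 : moment Y 2 P = 1) :
    moment Y 4 P ^ 2 + moment Y 3 P ^ 2 ≤ moment Y 6 P := by
  set m3 := moment Y 3 P
  set m4 := moment Y 4 P
  have hsq : ∀ ω, (Y ω ^ 3 - m4 * Y ω - m3) ^ 2 = ∑ k : Fin 7,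
      ![m3 ^ 2, 2 * m3 * m4, m4 ^ 2, -2 * m3, -2 * m4, 0, 1] k * Y ω ^ (k : ℕ) := by
    intro ω
    simp only [Fin.sum_univ_seven, Matrix.cons_val, Fin.coe_ofNat_eq_mod, Nat.reduceMod]
    ring
  have h : 0 ≤ ∫ ω, (Y ω ^ 3 - m4 * Y ω - m3) ^ 2 ∂P := integral_nonneg fun ω => sq_nonneg _
  rw [integral_congr_ae (.of_forall hsq), integral_sum_mul_pow hY, Fin.sum_univ_seven] at h
  simp only [Matrix.cons_val, Fin.coe_ofNat_eq_mod, Nat.reduceAdd, Nat.reduceMod,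
    moment_zero_eq_one, h1, h2] at h
  linarith

end Moments

lemma sq_lt_of_moment_bounds {κ γ m6 n : ℝ} (hκ : -2 ≤ κ) (hm6 : (κ + 3) ^ 2 + γ ^ 2 ≤ m6)
    (hn : 3 ≤ n) :
    κ ^ 2 < (m6 - 15 * κ - 10 * γ ^ 2 - 15) + 9 * (n / (n - 1)) * (κ + γ ^ 2)
      + 6 * n ^ 2 / ((n - 1) * (n - 2)) := by
  have hn1 : 0 < n - 1 := by linarith
  have hn2 : 0 < n - 2 := by linarith
  have hsplit : (m6 - 15 * κ - 10 * γ ^ 2 - 15) + 9 * (n / (n - 1)) * (κ + γ ^ 2)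
      + 6 * n ^ 2 / ((n - 1) * (n - 2)) - κ ^ 2
      = (m6 - (κ + 3) ^ 2 - γ ^ 2) + 9 * (κ + 2 + γ ^ 2) / (n - 1)
        + 24 / ((n - 1) * (n - 2)) := by
    field_simp
    ring
  have h9 : 0 ≤ 9 * (κ + 2 + γ ^ 2) / (n - 1) := by
    have := sq_nonneg γ
    exact div_nonneg (by linarith) hn1.le
  have h24 : 0 < 24 / ((n - 1) * (n - 2)) := by positivity
  linarith

lemma abs_div_sqrt_lt_one {x y : ℝ} (h : x ^ 2 < y) : |x / √y| < 1 := by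
  have hy : 0 < y := (sq_nonneg x).trans_lt h
  rw [abs_div, abs_of_nonneg (Real.sqrt_nonneg y), div_lt_one (Real.sqrt_pos.mpr hy),
    ← Real.sqrt_sq_eq_abs]
  exact Real.sqrt_lt_sqrt (sq_nonneg x) h

/-- For a real random variable `X` with `E X⁶ < ∞`, mean `μ`, variance `σ² > 0`, skewness
`γ`, excess kurtosis `κ` and sixth standardized cumulant `λ`, the quantity
`ρ₃ = κ / √(λ + 9(n/(n-1))(κ + γ²) + 6n²/((n-1)(n-2)))` satisfies `|ρ₃| < 1` for every
integer `n ≥ 3`. -/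
theorem abs_rho3_lt_one
    {Ω : Type*} [MeasureSpace Ω] [IsProbabilityMeasure (ℙ : Measure Ω)]
    (X : Ω → ℝ) (μ σ μ3 μ4 μ6 γ κ lam : ℝ)
    (hmeas : Measurable X)
    (hmom : Integrable (fun ω => (X ω) ^ 6) ℙ)
    (hmean : 𝔼[X] = μ)
    (hσ : 0 < σ) (hvar : variance X ℙ = σ ^ 2)
    (hμ3 : (∫ ω, (X ω - μ) ^ 3 ∂ℙ) = μ3)
    (hμ4 : (∫ ω, (X ω - μ) ^ 4 ∂ℙ) = μ4)
    (hμ6 : (∫ ω, (X ω - μ) ^ 6 ∂ℙ) = μ6)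
    (hγ : γ = μ3 / σ ^ 3) (hκ : κ = μ4 / σ ^ 4 - 3)
    (hlam : lam = μ6 / σ ^ 6 - 15 * κ - 10 * γ ^ 2 - 15) :
    ∀ n : ℕ, 3 ≤ n →
      |κ / Real.sqrt (lam + 9 * ((n : ℝ) / ((n : ℝ) - 1)) * (κ + γ ^ 2)
        + 6 * (n : ℝ) ^ 2 / (((n : ℝ) - 1) * ((n : ℝ) - 2)))| < 1 := by
  intro n hn
  have hX : MemLp X 6 ℙ :=
    memLp_of_integrable_pow (by decide) hmeas.aestronglyMeasurable hmom
  have hZ : MemLp (fun ω => (X ω - μ) / σ) 6 ℙ := by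
    simpa [div_eq_mul_inv] using (hX.sub (memLp_const μ)).mul_const σ⁻¹
  have h1 : moment (fun ω => (X ω - μ) / σ) 1 ℙ = 0 := by
    simp only [moment_div_const, pow_one]
    rw [integral_sub (hX.integrable (by norm_num)) (integrable_const μ)]
    simp [hmean]
  have h2 : moment (fun ω => (X ω - μ) / σ) 2 ℙ = 1 := by
    rw [moment_div_const, ← hmean, ← variance_eq_integral hmeas.aemeasurable, hvar,
      div_self (by positivity)]
  have hκ_ge : -2 ≤ κ := by
    have := one_le_moment_four (hZ.mono_exponent (by norm_num)) h2
    rw [moment_div_const, hμ4] at this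
    linarith
  have hm6 := moment_four_sq_add_moment_three_sq_le_moment_six hZ h1 h2
  rw [moment_div_const, moment_div_const, moment_div_const, hμ3, hμ4, hμ6, ← hγ,
    show μ4 / σ ^ 4 = κ + 3 by rw [hκ]; ring] at hm6
  apply abs_div_sqrt_lt_one
  rw [hlam]
  exact sq_lt_of_moment_bounds hκ_ge hm6 (by exact_mod_cast hn)
end
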